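/- Let M̂ be the latent-augmented MDP of a finite-horizon MDP M along an embedding kernel κ, let π⋆ be a pointwise optimal policy for M, and let π̂⋆ be a pointwise optimal policy for M̂. Then the optimal expected returns are equal: J(π⋆) = Ĵ(π̂⋆). -/
import Mathlib



open Finset

/-- A finite-horizon MDP `M = (S, A, T, P, R, μ, γ)` with finite nonempty state space `S`
and finite nonempty action space `A` (nonemptiness is carried as typeclass assumptions
where needed). Probability mass functions on a finite type are represented as nonnegative
real-valued functions summing to `1`. -/
structure FinMDP (S A : Type) [Fintype S] [Fintype A] where
  T : ℕ
  hT : 1 ≤ T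
  P : S → A → S → ℝ
  P_nonneg : ∀ s a s', 0 ≤ P s a s'
  P_sum_one : ∀ s a, ∑ s' : S, P s a s' = 1
  R : S → A → ℝ
  μ : S → ℝ
  μ_nonneg : ∀ s, 0 ≤ μ s
  μ_sum_one : ∑ s : S, μ s = 1
  γ : ℝ
  γ_pos : 0 < γ
  γ_le_one : γ ≤ 1

/-- A policy `π = (π_t)_{0 ≤ t < T}`: for each time `t < T` and state `s`, a probability
mass function `π_t(s)` on the action space. -/
structure FinPolicy (S A : Type) [Fintype A] (T : ℕ) where
  p : Fin T → S → A → ℝ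
  nonneg : ∀ t s a, 0 ≤ p t s a
  sum_one : ∀ t s, ∑ a : A, p t s a = 1

variable {S A Z Z' : Type} [Fintype S] [Fintype A] [Fintype Z] [Fintype Z']

/-- Auxiliary backward recursion, indexed by the number `k` of remaining steps:
`Vaux k s` is the value at time `T - k` in state `s`. -/
noncomputable def FinMDP.Vaux (M : FinMDP S A) (π : FinPolicy S A M.T) : ℕ → S → ℝ
  | 0, _ => 0
  | k + 1, s =>
      ∑ a : A,
        π.p ⟨M.T - (k + 1), Nat.sub_lt (Nat.lt_of_lt_of_le Nat.one_pos M.hT) (Nat.succ_pos k)⟩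
            s a *
          (M.R s a + M.γ * ∑ s' : S, M.P s a s' * M.Vaux π k s')

/-- The value function `V^π_t(s)` (meaningful for `0 ≤ t ≤ T`): `V^π_T(s) = 0` and, for
`t < T`, `V^π_t(s) = ∑_a π_t(s)(a) · (R(s,a) + γ · ∑_{s'} P(s,a)(s') · V^π_{t+1}(s'))`. -/
noncomputable def FinMDP.V (M : FinMDP S A) (π : FinPolicy S A M.T) (t : ℕ) (s : S) : ℝ :=
  M.Vaux π (M.T - t) s

/-- The expected return `J(π) = ∑_s μ(s) · V^π_0(s)`. -/
noncomputable def FinMDP.J (M : FinMDP S A) (π : FinPolicy S A M.T) : ℝ :=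
  ∑ s : S, M.μ s * M.V π 0 s

/-- A policy `π⋆` is pointwise optimal for `M` if `V^{π⋆}_t(s) ≥ V^π_t(s)` for every
policy `π`, every `0 ≤ t ≤ T` and every state `s`. -/
def FinMDP.PointwiseOptimal (M : FinMDP S A) (πs : FinPolicy S A M.T) : Prop :=
  ∀ (π : FinPolicy S A M.T) (t : ℕ), t ≤ M.T → ∀ s : S, M.V π t s ≤ M.V πs t s


/-- An embedding kernel `κ : S → PMF(Z)` into a finite latent space `Z`. -/
structure FinKernel (S Z : Type) [Fintype Z] where
  k : S → Z → ℝ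
  nonneg : ∀ s z, 0 ≤ k s z
  sum_one : ∀ s, ∑ z : Z, k s z = 1

/-- The latent-augmented MDP `M̂` of `M` along the embedding kernel `κ`: state space `Z × S`,
initial distribution `μ̂(z,s) = μ(s)·κ(s)(z)`, transitions
`P̂((z,s),a)(z',s') = P(s,a)(s')·κ(s')(z')`, reward `R̂((z,s),a) = R(s,a)`. -/
noncomputable def FinMDP.latentAug (M : FinMDP S A) (κ : FinKernel S Z) :
    FinMDP (Z × S) A where
  T := M.T
  hT := M.hT
  P := fun x a y => M.P x.2 a y.2 * κ.k y.2 y.1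
  P_nonneg := fun _ _ _ => mul_nonneg (M.P_nonneg _ _ _) (κ.nonneg _ _)
  P_sum_one := by
    intro x a
    rw [Fintype.sum_prod_type, Finset.sum_comm]
    calc ∑ s' : S, ∑ z' : Z, M.P x.2 a s' * κ.k s' z'
        = ∑ s' : S, M.P x.2 a s' * ∑ z' : Z, κ.k s' z' := by simp [Finset.mul_sum]
      _ = 1 := by simp [κ.sum_one, M.P_sum_one]
  R := fun x a => M.R x.2 a
  μ := fun x => M.μ x.2 * κ.k x.2 x.1
  μ_nonneg := fun _ => mul_nonneg (M.μ_nonneg _) (κ.nonneg _ _)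
  μ_sum_one := by
    rw [Fintype.sum_prod_type, Finset.sum_comm]
    calc ∑ s : S, ∑ z : Z, M.μ s * κ.k s z
        = ∑ s : S, M.μ s * ∑ z : Z, κ.k s z := by simp [Finset.mul_sum]
      _ = 1 := by simp [κ.sum_one, M.μ_sum_one]
  γ := M.γ
  γ_pos := M.γ_pos
  γ_le_one := M.γ_le_one

/-- The lift `π↑` of a policy `π` of `M` to the latent-augmented MDP:
`π↑_t(z, s) = π_t(s)`. -/
def FinPolicy.lift {T : ℕ} (Z : Type) (π : FinPolicy S A T) : FinPolicy (Z × S) A T where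
  p t x a := π.p t x.2 a
  nonneg := fun t x a => π.nonneg t x.2 a
  sum_one := fun t x => π.sum_one t x.2

/-- The marginalization `π̄` of a policy `π̂` of the latent-augmented MDP:
`π̄_t(s)(a) = ∑_z κ(s)(z) · π̂_t(z, s)(a)`. -/
noncomputable def FinKernel.marg {T : ℕ} (κ : FinKernel S Z) (π : FinPolicy (Z × S) A T) :
    FinPolicy S A T where
  p t s a := ∑ z : Z, κ.k s z * π.p t (z, s) a
  nonneg := fun t s a =>
    Finset.sum_nonneg fun z _ => mul_nonneg (κ.nonneg _ _) (π.nonneg _ _ _)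
  sum_one := by
    intro t s
    rw [Finset.sum_comm]
    calc ∑ z : Z, ∑ a : A, κ.k s z * π.p t (z, s) a
        = ∑ z : Z, κ.k s z * ∑ a : A, π.p t (z, s) a := by simp [Finset.mul_sum]
      _ = 1 := by simp [π.sum_one, κ.sum_one]


lemma latentAug_T (M : FinMDP S A) (κ : FinKernel S Z) : (M.latentAug κ).T = M.T := rfl

lemma lift_Vaux (M : FinMDP S A) (κ : FinKernel S Z) (π : FinPolicy S A M.T) :
    ∀ (k : ℕ) (z : Z) (s : S),
      (M.latentAug κ).Vaux (π.lift Z) k (z, s) = M.Vaux π k s := by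
  intro k
  induction k with
  | zero => intro z s; simp [FinMDP.Vaux]
  | succ k ih =>
    intro z s
    show (∑ a : A, (π.lift Z).p _ (z,s) a *
        ((M.latentAug κ).R (z,s) a + (M.latentAug κ).γ *
          ∑ y : Z × S, (M.latentAug κ).P (z,s) a y * (M.latentAug κ).Vaux (π.lift Z) k y)) = _
    have hin : ∀ a : A,
        (∑ y : Z × S, (M.latentAug κ).P (z,s) a y * (M.latentAug κ).Vaux (π.lift Z) k y)
        = ∑ s' : S, M.P s a s' * M.Vaux π k s' := by
      intro a
      rw [Fintype.sum_prod_type, Finset.sum_comm]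
      have : ∀ s' : S, (∑ z' : Z, (M.latentAug κ).P (z,s) a (z', s') *
          (M.latentAug κ).Vaux (π.lift Z) k (z', s')) = M.P s a s' * M.Vaux π k s' := by
        intro s'
        have : ∀ z' : Z, (M.latentAug κ).P (z,s) a (z', s') *
            (M.latentAug κ).Vaux (π.lift Z) k (z', s')
            = κ.k s' z' * (M.P s a s' * M.Vaux π k s') := by
          intro z'
          show M.P s a s' * κ.k s' z' * _ = _
          rw [ih z' s']; ring
        rw [Finset.sum_congr rfl fun z' _ => this z', ← Finset.sum_mul, κ.sum_one, one_mul]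
      rw [Finset.sum_congr rfl fun s' _ => this s']
    simp only [hin]
    rfl

lemma marg_Vaux (M : FinMDP S A) (κ : FinKernel S Z) (π : FinPolicy (Z × S) A M.T) :
    ∀ (k : ℕ) (s : S),
      M.Vaux (κ.marg π) k s = ∑ z : Z, κ.k s z * (M.latentAug κ).Vaux π k (z, s) := by
  intro k
  induction k with
  | zero => intro s; simp [FinMDP.Vaux]
  | succ k ih =>
    intro s
    have hW : ∀ (z : Z), (M.latentAug κ).Vaux π (k+1) (z, s)
        = ∑ a : A, π.p ⟨M.T - (k+1), Nat.sub_lt (Nat.lt_of_lt_of_le Nat.one_pos M.hT)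
            (Nat.succ_pos k)⟩ (z, s) a *
          (M.R s a + M.γ * ∑ s' : S, M.P s a s' * M.Vaux (κ.marg π) k s') := by
      intro z
      show (∑ a : A, π.p _ (z,s) a *
        ((M.latentAug κ).R (z,s) a + (M.latentAug κ).γ *
          ∑ y : Z × S, (M.latentAug κ).P (z,s) a y * (M.latentAug κ).Vaux π k y)) = _
      refine Finset.sum_congr rfl fun a _ => ?_
      congr 1
      have hin : (∑ y : Z × S, (M.latentAug κ).P (z,s) a y * (M.latentAug κ).Vaux π k y)
          = ∑ s' : S, M.P s a s' * M.Vaux (κ.marg π) k s' := by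
        rw [Fintype.sum_prod_type, Finset.sum_comm]
        refine Finset.sum_congr rfl fun s' _ => ?_
        rw [ih s', Finset.mul_sum]
        refine Finset.sum_congr rfl fun z' _ => ?_
        show M.P s a s' * κ.k s' z' * _ = _
        ring
      rw [hin]
      rfl
    show (∑ a : A, (κ.marg π).p ⟨M.T - (k+1), _⟩ s a *
        (M.R s a + M.γ * ∑ s' : S, M.P s a s' * M.Vaux (κ.marg π) k s')) = _
    simp only [hW, Finset.mul_sum]
    rw [Finset.sum_comm]
    refine Finset.sum_congr rfl fun a _ => ?_
    show (∑ z : Z, κ.k s z * π.p _ (z,s) a) * _ = ∑ z : Z, κ.k s z * (π.p _ (z,s) a * _)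
    rw [Finset.sum_mul]
    exact Finset.sum_congr rfl fun z _ => by ring

/-- The optimal expected returns of `M` and of its latent-augmented MDP `M̂` are equal:
`J(π⋆) = Ĵ(π̂⋆)`. -/
theorem stmt_11 [Nonempty S] [Nonempty A] [Nonempty Z]
    (M : FinMDP S A) (κ : FinKernel S Z)
    (πstar : FinPolicy S A M.T) (hstar : M.PointwiseOptimal πstar)
    (πhatstar : FinPolicy (Z × S) A M.T)
    (hhatstar : (M.latentAug κ).PointwiseOptimal πhatstar) :
    M.J πstar = (M.latentAug κ).J πhatstar := by
  -- J(π⋆) ≤ Ĵ(π̂⋆) via the lift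
  have hle1 : M.J πstar ≤ (M.latentAug κ).J πhatstar := by
    have hliftV : ∀ z s, (M.latentAug κ).V (πstar.lift Z) 0 (z, s) = M.V πstar 0 s := by
      intro z s
      exact lift_Vaux M κ πstar M.T z s
    have h1 : M.J πstar = (M.latentAug κ).J (πstar.lift Z) := by
      unfold FinMDP.J
      rw [Fintype.sum_prod_type, Finset.sum_comm]
      refine Finset.sum_congr rfl fun s _ => ?_
      have : ∀ z : Z, (M.latentAug κ).μ (z, s) * (M.latentAug κ).V (πstar.lift Z) 0 (z, s)
          = κ.k s z * (M.μ s * M.V πstar 0 s) := by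
        intro z
        show M.μ s * κ.k s z * _ = _
        rw [hliftV z s]; ring
      rw [Finset.sum_congr rfl fun z _ => this z, ← Finset.sum_mul, κ.sum_one, one_mul]
    rw [h1]
    unfold FinMDP.J
    refine Finset.sum_le_sum fun x _ => ?_
    exact mul_le_mul_of_nonneg_left
      (hhatstar (πstar.lift Z) 0 (Nat.zero_le _) x) ((M.latentAug κ).μ_nonneg x)
  -- Ĵ(π̂⋆) ≤ J(π⋆) via marginalization
  have hle2 : (M.latentAug κ).J πhatstar ≤ M.J πstar := by
    have h2 : (M.latentAug κ).J πhatstar = M.J (κ.marg πhatstar) := by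
      unfold FinMDP.J
      rw [Fintype.sum_prod_type, Finset.sum_comm]
      refine Finset.sum_congr rfl fun s _ => ?_
      have := marg_Vaux M κ πhatstar M.T s
      unfold FinMDP.V
      simp only [Nat.sub_zero, latentAug_T]
      rw [this, Finset.mul_sum]
      refine Finset.sum_congr rfl fun z _ => ?_
      show M.μ s * κ.k s z * _ = _
      ring
    rw [h2]
    unfold FinMDP.J
    refine Finset.sum_le_sum fun s _ => ?_
    exact mul_le_mul_of_nonneg_left
      (hstar (κ.marg πhatstar) 0 (Nat.zero_le _) s) (M.μ_nonneg s)
  linarith
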